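/- Let S be an intrinsic set with recursive head H in a CADMG G. Then for any set A with H ⊆ A ⊆ S, the intrinsic closure of A equals S: I_G(A) = S. -/

import Mathlib

/-!
Iterating the closure step for `A` from `G` produces induced subgraphs `G[X₀] ⊇ G[X₁] ⊇ ⋯`,
which are stable after `|α|` rounds. Every `Xₖ` contains `S`: each vertex of `S` reaches the
head `sterile S ⊆ A` along directed edges inside `S`, and `S` is bidirected-connected and meets
`A`. Conversely, the stable set `X` consists of ancestors of `A` that are bidirected-connected
to `A` inside `G[X]`. Along the restrictions that reach `G[S]` from `G`, every graph contains
`A ⊆ S`, so these two properties keep `X` inside each restriction to a district or to a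
random-ancestral set; hence `X ⊆ S`.
-/

open Classical

noncomputable section

/-- A conditional acyclic directed mixed graph (CADMG): disjoint sets of random
vertices `V` and fixed vertices `W`, directed edges into `V` with no loops or
directed cycles, symmetric bidirected edges between distinct random vertices,
and every fixed vertex has at least one child. -/
structure CADMG (α : Type) where
  V : Set α
  W : Set α
  dir : Set (α × α)
  bi : Set (α × α)
  disjointVW : Disjoint V W
  dir_mem : ∀ e ∈ dir, e.1 ∈ V ∪ W ∧ e.2 ∈ V
  dir_irrefl : ∀ e ∈ dir, e.1 ≠ e.2
  acyclic : ∀ a b : α, Relation.ReflTransGen (fun x y => (x, y) ∈ dir) a b →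
      Relation.ReflTransGen (fun x y => (x, y) ∈ dir) b a → a = b
  bi_symm : ∀ a b : α, (a, b) ∈ bi → (b, a) ∈ bi
  bi_mem : ∀ e ∈ bi, e.1 ∈ V ∧ e.2 ∈ V
  bi_irrefl : ∀ e ∈ bi, e.1 ≠ e.2
  fixed_child : ∀ w ∈ W, ∃ v, (w, v) ∈ dir

namespace CADMG

variable {α : Type}

/-- The parents of a vertex. -/
def pa (G : CADMG α) (b : α) : Set α := {a | (a, b) ∈ G.dir}

/-- The parents of a set of vertices. -/
def paSet (G : CADMG α) (A : Set α) : Set α := {a | ∃ b ∈ A, (a, b) ∈ G.dir}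

/-- The ancestors of a set of vertices (every vertex is its own ancestor). -/
def anc (G : CADMG α) (A : Set α) : Set α :=
  {w | ∃ v ∈ A, Relation.ReflTransGen (fun x y => (x, y) ∈ G.dir) w v}

/-- An ancestral set contains all of its own ancestors. -/
def Ancestral (G : CADMG α) (A : Set α) : Prop := G.anc A = A

/-- A random-ancestral set: a set of random vertices all of whose ancestors are
in the set itself or fixed. -/
def RandomAncestral (G : CADMG α) (A : Set α) : Prop :=
  A ⊆ G.V ∧ G.anc A ⊆ A ∪ G.W

/-- The sterile subset of `C`: those members of `C` that are not parents of `C`. -/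
def sterile (G : CADMG α) (C : Set α) : Set α := C \ G.paSet C

/-- A bidirected-connected set of random vertices: every two members are joined by
a path of bidirected edges with all intermediate vertices inside the set. -/
def BiConn (G : CADMG α) (B : Set α) : Prop :=
  B ⊆ G.V ∧ ∀ a ∈ B, ∀ b ∈ B,
    Relation.ReflTransGen (fun x y => (x, y) ∈ G.bi ∧ x ∈ B ∧ y ∈ B) a b

/-- A district: a maximal bidirected-connected set of random vertices. -/
def IsDistrict (G : CADMG α) (D : Set α) : Prop :=
  D.Nonempty ∧ G.BiConn D ∧ ∀ D', G.BiConn D' → D ⊆ D' → D' = D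

/-- `dis G B`: the union of the districts of `G` meeting `B`. -/
def dis (G : CADMG α) (B : Set α) : Set α :=
  ⋃₀ {D | G.IsDistrict D ∧ (D ∩ B).Nonempty}

/-- The induced graph `G[C]`: random vertices `C`, fixed vertices `pa_G(C) \ C`,
the bidirected edges of `G` within `C` and the directed edges of `G` pointing
into `C`. -/
def induce (G : CADMG α) (C : Set α) : CADMG α where
  V := C ∩ G.V
  W := G.paSet (C ∩ G.V) \ (C ∩ G.V)
  dir := {e | e ∈ G.dir ∧ e.2 ∈ C ∩ G.V}
  bi := {e | e ∈ G.bi ∧ e.1 ∈ C ∩ G.V ∧ e.2 ∈ C ∩ G.V}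
  disjointVW := by
    rw [Set.disjoint_left]; rintro a ha ⟨-, h⟩; exact h ha
  dir_mem := by
    rintro e ⟨he, h2⟩
    refine ⟨?_, h2⟩
    by_cases h1 : e.1 ∈ C ∩ G.V
    · exact Or.inl h1
    · exact Or.inr ⟨⟨e.2, h2, he⟩, h1⟩
  dir_irrefl := fun e he => G.dir_irrefl e he.1
  acyclic := fun a b h1 h2 =>
    G.acyclic a b
      (by clear h2; induction h1 with | refl => exact .refl | tail _ h ih => exact ih.tail h.1)
      (by clear h1; induction h2 with | refl => exact .refl | tail _ h ih => exact ih.tail h.1)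
  bi_symm := fun a b h => ⟨G.bi_symm a b h.1, h.2.2, h.2.1⟩
  bi_mem := fun e he => ⟨he.2.1, he.2.2⟩
  bi_irrefl := fun e he => G.bi_irrefl e he.1
  fixed_child := by
    rintro w ⟨⟨b, hb, hwb⟩, -⟩
    exact ⟨b, hwb, hb⟩

/-- A CADMG `G'` is reachable from `G` if it is obtained by iteratively
restricting to a district (`𝔡`) or to a random-ancestral set (`𝔪`). -/
inductive Reach : CADMG α → CADMG α → Prop where
  | refl (G : CADMG α) : Reach G G
  | district {G₁ G₂ : CADMG α} {D : Set α} :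
      Reach G₁ G₂ → G₂.IsDistrict D → Reach G₁ (G₂.induce D)
  | margin {G₁ G₂ : CADMG α} {A : Set α} :
      Reach G₁ G₂ → G₂.RandomAncestral A → Reach G₁ (G₂.induce A)

/-- `G₁` is a subgraph of `G₂`. -/
def Subgraph (G₁ G₂ : CADMG α) : Prop :=
  G₁.V ⊆ G₂.V ∧ G₁.W ⊆ G₂.W ∧ G₁.dir ⊆ G₂.dir ∧ G₁.bi ⊆ G₂.bi

/-- An intrinsic set: a nonempty bidirected-connected set `S` of random vertices
such that `G[S]` is reachable from `G`. -/
def Intrinsic (G : CADMG α) (S : Set α) : Prop :=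
  S.Nonempty ∧ G.BiConn S ∧ Reach G (G.induce S)

/-- The recursive heads of `G`: sterile subsets of intrinsic sets. -/
def heads (G : CADMG α) : Set (Set α) :=
  {H | ∃ S, G.Intrinsic S ∧ G.sterile S = H}

/-- The (unique) intrinsic set whose recursive head is `H`. -/
def intrinsicOf (G : CADMG α) (H : Set α) : Set α :=
  ⋃₀ {S | G.Intrinsic S ∧ G.sterile S = H}

/-- The partial order on recursive heads: `H₁ ≺ H₂` iff the intrinsic set of
`H₁` is strictly contained in that of `H₂`. -/
def headLT (G : CADMG α) (H₁ H₂ : Set α) : Prop :=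
  G.intrinsicOf H₁ ⊂ G.intrinsicOf H₂

/-- The tail of a recursive head: the parents of its intrinsic set. -/
def tail (G : CADMG α) (H : Set α) : Set α := G.paSet (G.intrinsicOf H)

/-- One step of the intrinsic-closure iteration: restrict to the ancestors of
`B`, then to the districts meeting `B`. -/
def closureStep (B : Set α) (G : CADMG α) : CADMG α :=
  (G.induce (G.anc B)).induce ((G.induce (G.anc B)).dis B)

/-- The intrinsic closure `I_G(B)`: the random vertex set of the stable graph
obtained by repeatedly alternating restriction to the ancestors of `B` and to
the districts meeting `B`.  (After `Fintype.card α` rounds the iteration has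
stabilised.) -/
def intrinsicClosure [Fintype α] (G : CADMG α) (B : Set α) : Set α :=
  ((closureStep B)^[Fintype.card α] G).V

/-- `Φ_G(C)`: the `≺`-maximal recursive heads of `G` contained in `C`. -/
def Phi (G : CADMG α) (C : Set α) : Set (Set α) :=
  {H | H ∈ G.heads ∧ H ⊆ C ∧ ∀ H' ∈ G.heads, H' ⊆ C → H' ≠ H → ¬ G.headLT H H'}

/-- `ψ_G(C) = C \ ⋃ Φ_G(C)`. -/
def psi (G : CADMG α) (C : Set α) : Set α := C \ ⋃₀ G.Phi C

/-- The recursive-head partition `⟨C⟩_G`, defined by `⟨∅⟩ = ∅` and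
`⟨C⟩ = Φ(C) ∪ ⟨ψ(C)⟩`.  (The guard on cardinalities is automatically satisfied
whenever the recursion is used, since `ψ_G(C) ⊊ C` for nonempty `C`.) -/
def partn (G : CADMG α) (C : Set α) : Set (Set α) :=
  if C = ∅ then ∅
  else if h : (G.psi C).ncard < C.ncard then G.Phi C ∪ G.partn (G.psi C)
  else G.Phi C
termination_by C.ncard
decreasing_by exact h

/-- A kernel `p_{V|W}`, written as a function of a full assignment of binary
values to all vertices: it takes values in `[0,1]`, depends only on the
coordinates in `V ∪ W`, and for every assignment to `W` (and the remaining
coordinates) the values summed over assignments to `V` equal `1`. -/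
def IsKernel [Fintype α] (V W : Set α) (p : (α → Bool) → ℝ) : Prop :=
  (∀ x, 0 ≤ p x ∧ p x ≤ 1) ∧
  (∀ x y : α → Bool, (∀ v ∈ V ∪ W, x v = y v) → p x = p y) ∧
  (∀ x : α → Bool, ∑ g : α → Bool,
      (if ∀ v, v ∉ V → g v = x v then p g else 0) = 1)

/-- Sum a function of assignments over all values of the coordinates in `D`
(the marginal summing out the variables in `D`). -/
def marginOut [Fintype α] (D : Set α) (p : (α → Bool) → ℝ) (x : α → Bool) : ℝ :=
  ∑ g : α → Bool, if ∀ v, v ∉ D → g v = x v then p g else 0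

/-- `q` is a version of the conditional kernel of `A` given `B` and `W`, derived
from the kernel `p = p_{V|W}`. -/
def IsCondVersion [Fintype α] (V W A B : Set α)
    (p q : (α → Bool) → ℝ) : Prop :=
  IsKernel A (B ∪ W) q ∧
  ∀ x : α → Bool, q x * marginOut (V \ B) p x = marginOut (V \ (A ∪ B)) p x

/-- Recursive factorization of a kernel `p` according to a CADMG `G`
(the nested Markov property): either `|V| = 1`, or (i) `p` factorizes into
kernels indexed by the districts of `G`, each of which (when there are at least
two districts) recursively factorizes according to the induced graph, and
(ii) for every ancestral set `A` with `V \ A ≠ ∅` the margin over `A` does not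
depend on the fixed coordinates outside `A` and recursively factorizes
according to `G[V ∩ A]`. -/
inductive RF [Fintype α] : CADMG α → ((α → Bool) → ℝ) → Prop where
  | base (G : CADMG α) (p : (α → Bool) → ℝ) (h : G.V.ncard = 1) : RF G p
  | factor (G : CADMG α) (p : (α → Bool) → ℝ)
      (Ds : Finset (Set α)) (r : Set α → (α → Bool) → ℝ)
      (hDs : ∀ D, G.IsDistrict D ↔ D ∈ Ds)
      (hker : ∀ D ∈ Ds, IsKernel D (G.paSet D \ D) (r D))
      (hfact : ∀ x, p x = ∏ D ∈ Ds, r D x)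
      (hrec : 2 ≤ Ds.card → ∀ D ∈ Ds, RF (G.induce D) (r D))
      (hmarg_nodep : ∀ A : Set α, G.Ancestral A → (G.V \ A).Nonempty →
        ∀ x y : α → Bool, (∀ v ∈ (G.V ∩ A) ∪ (G.W ∩ A), x v = y v) →
          marginOut (G.V \ A) p x = marginOut (G.V \ A) p y)
      (hmarg_rf : ∀ A : Set α, G.Ancestral A → (G.V \ A).Nonempty →
        RF (G.induce (G.V ∩ A)) (marginOut (G.V \ A) p)) :
      RF G p

/-- The alternating sum `Σ_{O ⊆ C ⊆ U} (−1)^{|C\O|} ∏_{H ∈ ⟨C⟩_G} q_H(x_T)`. -/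
def altSum (G : CADMG α) (q : Set α → (α → Bool) → ℝ) (x : α → Bool)
    (O U : Set α) : ℝ :=
  ∑ᶠ C ∈ {C : Set α | O ⊆ C ∧ C ⊆ U},
    (-1 : ℝ) ^ (C \ O).ncard * ∏ᶠ H ∈ G.partn C, q H x

/-- A kernel `p` is parameterized according to `G`: there are parameters
`q_H(x_T)` (one real number for each recursive head `H` and each value `x_T` of
its tail `T`) with
`p(x_V | x_W) = Σ_{O ⊆ C ⊆ V} (−1)^{|C\O|} ∏_{H ∈ ⟨C⟩_G} q_H(x_T)`,
where `O = {v ∈ V : x_v = 0}`. -/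
def Parameterized [Fintype α] (G : CADMG α) (p : (α → Bool) → ℝ) : Prop :=
  ∃ q : Set α → (α → Bool) → ℝ,
    (∀ H ∈ G.heads, ∀ x y : α → Bool,
        (∀ v ∈ G.tail H, x v = y v) → q H x = q H y) ∧
    ∀ x : α → Bool,
      p x = G.altSum q x {v | v ∈ G.V ∧ x v = false} G.V

end CADMG

theorem Function.isFixedPt_iterate_of_measure_le {β : Type*} {f : β → β} (μ : β → ℕ)
    (hf : ∀ b, f b ≠ b → μ (f b) < μ b) {b : β} {k : ℕ} (hk : μ b ≤ k) :
    Function.IsFixedPt f (f^[k] b) := by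
  induction k generalizing b with
  | zero => by_contra h; exact absurd (hf b h) (by omega)
  | succ k ih =>
    by_cases hb : f b = b
    · rw [Function.iterate_fixed hb]; exact hb
    · exact ih (by have := hf b hb; omega)

namespace CADMG

variable {α : Type}

@[ext]
theorem ext {G₁ G₂ : CADMG α} (hV : G₁.V = G₂.V) (hW : G₁.W = G₂.W)
    (hdir : G₁.dir = G₂.dir) (hbi : G₁.bi = G₂.bi) : G₁ = G₂ := by
  cases G₁; cases G₂; cases hV; cases hW; cases hdir; cases hbi; rfl

theorem induce_eq_self {G : CADMG α} {C : Set α} (hC : G.V ⊆ C) : G.induce C = G := by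
  have hCV : C ∩ G.V = G.V := Set.inter_eq_right.2 hC
  ext x
  · exact Set.ext_iff.1 hCV x
  · show x ∈ G.paSet (C ∩ G.V) \ (C ∩ G.V) ↔ x ∈ G.W
    rw [hCV]
    constructor
    · rintro ⟨⟨b, -, hxb⟩, hxV⟩
      exact ((G.dir_mem _ hxb).1).resolve_left hxV
    · intro hxW
      obtain ⟨v, hv⟩ := G.fixed_child x hxW
      exact ⟨⟨v, (G.dir_mem _ hv).2, hv⟩, Set.disjoint_right.1 G.disjointVW hxW⟩
  · exact ⟨fun h => h.1, fun h => ⟨h, hC (G.dir_mem x h).2, (G.dir_mem x h).2⟩⟩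
  · have hx := G.bi_mem x
    exact ⟨fun h => h.1, fun h => ⟨h, ⟨hC (hx h).1, (hx h).1⟩, hC (hx h).2, (hx h).2⟩⟩

theorem induce_induce (G : CADMG α) (X C : Set α) :
    (G.induce X).induce C = G.induce (C ∩ X) := by
  ext x <;> simp only [induce, paSet, Set.mem_sdiff, Set.mem_ofPred_eq, Set.mem_inter_iff] <;>
    grind

theorem induce_V_induce {G H : CADMG α} (hH : G.induce H.V = H) (C : Set α) :
    G.induce (H.induce C).V = H.induce C := by
  conv_rhs => rw [← hH, induce_induce]
  rfl

theorem V_subset_of_induce_eq {G H : CADMG α} (hH : G.induce H.V = H) : H.V ⊆ G.V := by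
  rw [← hH]; exact fun _ hx => hx.2

theorem dir_subset_of_induce_eq {G H : CADMG α} (hH : G.induce H.V = H) : H.dir ⊆ G.dir := by
  rw [← hH]; exact fun _ he => he.1

theorem bi_subset_of_induce_eq {G H : CADMG α} (hH : G.induce H.V = H) : H.bi ⊆ G.bi := by
  rw [← hH]; exact fun _ he => he.1

theorem mem_dir_of_induce_eq {G H : CADMG α} (hH : G.induce H.V = H) {x y : α}
    (hxy : (x, y) ∈ G.dir) (hy : y ∈ H.V) : (x, y) ∈ H.dir := by
  rw [← hH]; exact ⟨hxy, hy, V_subset_of_induce_eq hH hy⟩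

theorem mem_bi_of_induce_eq {G H : CADMG α} (hH : G.induce H.V = H) {x y : α}
    (hxy : (x, y) ∈ G.bi) (hx : x ∈ H.V) (hy : y ∈ H.V) : (x, y) ∈ H.bi := by
  rw [← hH]
  exact ⟨hxy, ⟨hx, V_subset_of_induce_eq hH hx⟩, hy, V_subset_of_induce_eq hH hy⟩

theorem Reach.induce_V_eq {G G' : CADMG α} (hR : Reach G G') : G.induce G'.V = G' := by
  induction hR with
  | refl => exact induce_eq_self subset_rfl
  | district _ _ ih => exact induce_V_induce ih _
  | margin _ _ ih => exact induce_V_induce ih _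

theorem bi_subset_bi_of_induce_eq {G H K : CADMG α} (hH : G.induce H.V = H)
    (hK : G.induce K.V = K) (hHK : H.V ⊆ K.V) : H.bi ⊆ K.bi := fun e he =>
  mem_bi_of_induce_eq hK (bi_subset_of_induce_eq hH he) (hHK (H.bi_mem e he).1)
    (hHK (H.bi_mem e he).2)

theorem dir_subset_dir_of_induce_eq {G H K : CADMG α} (hH : G.induce H.V = H)
    (hK : G.induce K.V = K) (hHK : H.V ⊆ K.V) : H.dir ⊆ K.dir := fun e he =>
  mem_dir_of_induce_eq hK (dir_subset_of_induce_eq hH he) (hHK (H.dir_mem e he).2)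

theorem anc_mono {G : CADMG α} {A B : Set α} (h : A ⊆ B) : G.anc A ⊆ G.anc B :=
  fun _ ⟨v, hv, hpath⟩ => ⟨v, h hv, hpath⟩

theorem anc_subset_anc_of_dir_subset {G H : CADMG α} (h : G.dir ⊆ H.dir) (A : Set α) :
    G.anc A ⊆ H.anc A :=
  fun _ ⟨v, hv, hpath⟩ => ⟨v, hv, Relation.ReflTransGen.mono (fun _ _ hxy => h hxy) _ _ hpath⟩

theorem IsDistrict.mem_of_bi {G : CADMG α} {D : Set α} (hD : G.IsDistrict D) {y z : α}
    (hy : y ∈ D) (hyz : (y, z) ∈ G.bi) : z ∈ D := by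
  set R := fun u v => (u, v) ∈ G.bi ∧ u ∈ insert z D ∧ v ∈ insert z D
  have hconn := hD.2.1
  have to_y : ∀ u ∈ insert z D, Relation.ReflTransGen R u y ∧ Relation.ReflTransGen R y u := by
    rintro u (rfl | hu)
    · exact ⟨.single ⟨G.bi_symm _ _ hyz, .inl rfl, .inr hy⟩, .single ⟨hyz, .inr hy, .inl rfl⟩⟩
    · have lift := Relation.ReflTransGen.mono (r := fun u v => (u, v) ∈ G.bi ∧ u ∈ D ∧ v ∈ D)
        (p := R) fun _ _ h => ⟨h.1, .inr h.2.1, .inr h.2.2⟩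
      exact ⟨lift _ _ (hconn.2 u hu y hy), lift _ _ (hconn.2 y hy u hu)⟩
  have hconn' : G.BiConn (insert z D) :=
    ⟨Set.insert_subset (G.bi_mem _ hyz).2 hconn.1,
      fun u hu v hv => (to_y u hu).1.trans (to_y v hv).2⟩
  exact hD.2.2 _ hconn' (Set.subset_insert z D) ▸ Set.mem_insert z D

theorem IsDistrict.mem_of_reflTransGen {G : CADMG α} {D : Set α} (hD : G.IsDistrict D)
    {a z : α} (ha : a ∈ D) (h : Relation.ReflTransGen (fun x y => (x, y) ∈ G.bi) a z) :
    z ∈ D := by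
  induction h with
  | refl => exact ha
  | tail _ hyz ih => exact hD.mem_of_bi ih hyz

theorem BiConn.exists_isDistrict_superset [Finite α] {G : CADMG α} {B : Set α}
    (hB : G.BiConn B) (hne : B.Nonempty) : ∃ D, G.IsDistrict D ∧ B ⊆ D := by
  obtain ⟨D, hBD, hD, hmax⟩ := Finite.exists_le_maximal (p := G.BiConn) hB
  exact ⟨D, ⟨hne.mono hBD, hD, fun D' hD' hDD' => (hmax hD' hDD').antisymm hDD'⟩, hBD⟩

theorem not_transGen_dir_self (G : CADMG α) (a : α) :
    ¬ Relation.TransGen (fun x y => (x, y) ∈ G.dir) a a := by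
  intro h
  obtain ⟨c, hac, hca⟩ := Relation.TransGen.head'_iff.1 h
  exact G.dir_irrefl _ hac (G.acyclic a c (.single hac) hca)

theorem exists_mem_sterile_reflTransGen [Finite α] (G : CADMG α) {S : Set α} {s : α}
    (hs : s ∈ S) : ∃ t ∈ G.sterile S,
      Relation.ReflTransGen (fun x y => (x, y) ∈ G.dir ∧ y ∈ S) s t := by
  set below := fun t' t => Relation.TransGen (fun x y => (x, y) ∈ G.dir) t t'
  have : IsTrans α below := ⟨fun _ _ _ h₁ h₂ => h₂.trans h₁⟩
  have : Std.Irrefl below := ⟨G.not_transGen_dir_self⟩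
  obtain ⟨t, hst, hmin⟩ := (Finite.wellFounded_of_trans_of_irrefl below).has_min
    {t | Relation.ReflTransGen (fun x y => (x, y) ∈ G.dir ∧ y ∈ S) s t} ⟨s, .refl⟩
  have htS : t ∈ S := by
    rcases Relation.ReflTransGen.cases_tail hst with rfl | ⟨_, -, -, ht⟩
    exacts [hs, ht]
  refine ⟨t, ⟨htS, ?_⟩, hst⟩
  rintro ⟨b, hbS, htb⟩
  exact hmin b (hst.tail ⟨htb, hbS⟩) (.single htb)

theorem closureStep_V_subset_anc (A : Set α) (H : CADMG α) :
    (closureStep A H).V ⊆ H.anc A :=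
  fun _ hx => hx.2.1

theorem closureStep_V_subset (A : Set α) (H : CADMG α) : (closureStep A H).V ⊆ H.V :=
  fun _ hx => hx.2.2

theorem exists_reflTransGen_bi_of_mem_closureStep {A : Set α} {H : CADMG α} {x : α}
    (hx : x ∈ (closureStep A H).V) :
    ∃ a ∈ A, Relation.ReflTransGen (fun u v => (u, v) ∈ H.bi) a x := by
  obtain ⟨D, ⟨hD, a, haD, haA⟩, hxD⟩ := hx.1
  exact ⟨a, haA, Relation.ReflTransGen.mono (fun _ _ h => h.1.1) _ _ (hD.2.1.2 a haD x hxD)⟩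

theorem closureStep_eq_self {A : Set α} {H : CADMG α} (h : H.V ⊆ (closureStep A H).V) :
    closureStep A H = H := by
  have hanc : H.induce (H.anc A) = H :=
    induce_eq_self fun _ hx => closureStep_V_subset_anc A H (h hx)
  unfold closureStep at h ⊢
  rw [hanc] at h ⊢
  exact induce_eq_self fun _ hx => (h hx).1

theorem induce_V_closureStep {G H : CADMG α} (hH : G.induce H.V = H) (A : Set α) :
    G.induce (closureStep A H).V = closureStep A H :=
  induce_V_induce (induce_V_induce hH _) _

theorem subset_closureStep_V [Finite α] {G H : CADMG α} (hH : G.induce H.V = H)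
    {S A : Set α} (hS : G.BiConn S) (hne : S.Nonempty) (hSA : G.sterile S ⊆ A)
    (hSH : S ⊆ H.V) : S ⊆ (closureStep A H).V := by
  set K := H.induce (H.anc A)
  have hK : G.induce K.V = K := induce_V_induce hH _
  have hSanc : S ⊆ H.anc A := fun s hs => by
    obtain ⟨t, ht, hpath⟩ := G.exists_mem_sterile_reflTransGen hs
    exact ⟨t, hSA ht, Relation.ReflTransGen.mono
      (fun _ _ h => mem_dir_of_induce_eq hH h.1 (hSH h.2)) _ _ hpath⟩
  have hSK : S ⊆ K.V := fun s hs => ⟨hSanc hs, hSH hs⟩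
  have hSconn : K.BiConn S := ⟨hSK, fun a ha b hb => Relation.ReflTransGen.mono
    (fun _ _ h => ⟨mem_bi_of_induce_eq hK h.1 (hSK h.2.1) (hSK h.2.2), h.2⟩) _ _
    (hS.2 a ha b hb)⟩
  obtain ⟨D, hD, hSD⟩ := hSconn.exists_isDistrict_superset hne
  obtain ⟨t, ht, -⟩ := G.exists_mem_sterile_reflTransGen hne.some_mem
  exact fun x hx => ⟨⟨D, ⟨hD, t, hSD ht.1, hSA ht⟩, hSD hx⟩, hSK hx⟩

theorem Reach.V_subset_of_isFixedPt {G G' H : CADMG α} {A : Set α} (hR : Reach G G')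
    (hH : G.induce H.V = H) (hfix : Function.IsFixedPt (closureStep A) H)
    (hA : A ⊆ G'.V) : H.V ⊆ G'.V := by
  induction hR with
  | refl => exact V_subset_of_induce_eq hH
  | district hR hD ih =>
    have hHV := ih fun _ ha => (hA ha).2
    have hbi := bi_subset_bi_of_induce_eq hH hR.induce_V_eq hHV
    intro x hx
    obtain ⟨a, haA, hpath⟩ := exists_reflTransGen_bi_of_mem_closureStep (hfix.symm ▸ hx)
    exact ⟨hD.mem_of_reflTransGen (hA haA).1
      (Relation.ReflTransGen.mono (fun _ _ h => hbi h) _ _ hpath), hHV hx⟩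
  | @margin G₂ _ hR hC ih =>
    have hHV := ih fun _ ha => (hA ha).2
    have hdir := dir_subset_dir_of_induce_eq hH hR.induce_V_eq hHV
    intro x hx
    have hxanc := anc_mono (fun _ ha => (hA ha).1)
      (anc_subset_anc_of_dir_subset hdir A (closureStep_V_subset_anc A H (hfix.symm ▸ hx)))
    refine ⟨(hC.2 hxanc).resolve_right fun hxW => ?_, hHV hx⟩
    exact Set.disjoint_left.1 G₂.disjointVW (hHV hx) hxW

theorem induce_V_iterate_closureStep (G : CADMG α) (A : Set α) (k : ℕ) :
    G.induce ((closureStep A)^[k] G).V = (closureStep A)^[k] G := by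
  induction k with
  | zero => exact induce_eq_self subset_rfl
  | succ k ih => rw [Function.iterate_succ_apply']; exact induce_V_closureStep ih A

theorem subset_V_iterate_closureStep [Finite α] {G : CADMG α} {S A : Set α} (hS : G.BiConn S)
    (hne : S.Nonempty) (hSA : G.sterile S ⊆ A) (k : ℕ) :
    S ⊆ ((closureStep A)^[k] G).V := by
  induction k with
  | zero => exact hS.1
  | succ k ih =>
    rw [Function.iterate_succ_apply']
    exact subset_closureStep_V (induce_V_iterate_closureStep G A k) hS hne hSA ih

theorem isFixedPt_iterate_closureStep [Fintype α] (G : CADMG α) (A : Set α) :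
    Function.IsFixedPt (closureStep A) ((closureStep A)^[Fintype.card α] G) := by
  refine Function.isFixedPt_iterate_of_measure_le (fun H => H.V.ncard) (fun H hne => ?_) ?_
  · exact Set.ncard_lt_ncard <|
      (closureStep_V_subset A H).ssubset_of_not_subset fun h => hne (closureStep_eq_self h)
  · simpa only [Nat.card_eq_fintype_card] using Set.ncard_le_card G.V

end CADMG

/-- **Lemma 3 (intrinsic sets are closures of their heads).**  Let `S` be an
intrinsic set of the CADMG `G` with recursive head `H = sterile_G(S)`.  Then
for any set `A` with `H ⊆ A ⊆ S`, the intrinsic closure of `A` is `S`. -/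
theorem intrinsicClosure_eq_of_head_subset {α : Type} [Fintype α]
    (G : CADMG α) (S H A : Set α)
    (hS : G.Intrinsic S) (hH : G.sterile S = H)
    (hHA : H ⊆ A) (hAS : A ⊆ S) :
    G.intrinsicClosure A = S := by
  obtain ⟨hne, hconn, hreach⟩ := hS
  subst hH
  have hSV : (G.induce S).V = S := Set.inter_eq_left.2 hconn.1
  refine Set.Subset.antisymm ?_ (CADMG.subset_V_iterate_closureStep hconn hne hHA _)
  have hstable := hreach.V_subset_of_isFixedPt (CADMG.induce_V_iterate_closureStep G A _)
    (CADMG.isFixedPt_iterate_closureStep G A) (hAS.trans hSV.superset)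
  rwa [hSV] at hstable
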